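/- arXiv:2506.16793 — 7 statements merged into one kernel-verified Lean document; each statement's English description precedes it below -/
import Mathlib

section
/- Let C be an [n, k, n−k] near-MDS code over F_q with n − k > q and k ≥ 2. Then k ≤ 2q. -/
/-!
Let `u` be a dual codeword of the minimum weight `k`, with support `S`. Dual codewords vanishing
on `n - k - 2` chosen coordinates outside `S` form a space of dimension at least `2`, so one of
them, `v`, is independent of `u`; outside `S` it is nonzero in at most two places. Some ratio
`a = v i / u i` is attained on at least `k / q` coordinates of `S`, and then `v - a • u` is a
nonzero dual codeword of weight at most `k - k / q + 2`. Minimality of `k` forces `k / q ≤ 2`.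
-/

open Finset Matrix Module

section
variable {ι F : Type*} [Fintype ι] [Field F]

theorem hammingNorm_sub_smul_add_card [DecidableEq F] (u v : ι → F) (a : F) :
    hammingNorm (v - a • u) + #{i | u i ≠ 0 ∧ v i = a * u i} =
      hammingNorm u + #{i | u i = 0 ∧ v i ≠ 0} := by
  simp only [hammingNorm, card_filter, ← sum_add_distrib]
  refine sum_congr rfl fun i _ => ?_
  by_cases hu : u i = 0 <;> by_cases hv : v i = a * u i
  all_goals simp [hu, hv, sub_eq_zero]

theorem hammingNorm_le_card_mul_of_forall_le_hammingNorm_sub_smul [Fintype F] [DecidableEq F]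
    (u v : ι → F) (m : ℕ) (hv : ∀ a : F, hammingNorm u ≤ hammingNorm (v - a • u))
    (hout : #{i | u i = 0 ∧ v i ≠ 0} ≤ m) :
    hammingNorm u ≤ Fintype.card F * m := by
  by_contra! h
  obtain ⟨a, -, ha⟩ := exists_lt_card_fiber_of_mul_lt_card_of_maps_to
    (s := {i | u i ≠ 0}) (f := fun i => v i / u i) (fun _ _ => mem_univ _) h
  have hfiber : #{i ∈ {i | u i ≠ 0} | v i / u i = a} = #{i | u i ≠ 0 ∧ v i = a * u i} := by
    rw [filter_filter]
    exact congrArg card <| filter_congr fun i _ => and_congr_right fun hu => div_eq_iff hu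
  have := hammingNorm_sub_smul_add_card u v a
  have := hv a
  omega

def dualCode (C : Submodule F (ι → F)) : Submodule F (ι → F) :=
  LinearMap.ker ((dotProductBilin F F).compl₂ C.subtype)

theorem mem_dualCode {C : Submodule F (ι → F)} {v : ι → F} :
    v ∈ dualCode C ↔ ∀ c ∈ C, v ⬝ᵥ c = 0 := by
  simp [dualCode, LinearMap.ext_iff]

theorem card_sub_finrank_sub_card_le_finrank_dualCode_inf_pi (C : Submodule F (ι → F))
    (T : Finset ι) :
    Fintype.card ι - finrank F C - #T ≤
      finrank F (dualCode C ⊓ Submodule.pi (T : Set ι) fun _ => ⊥ : Submodule F (ι → F)) := by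
  let restrict : (ι → F) →ₗ[F] (T → F) := LinearMap.funLeft F F (↑)
  have hker : LinearMap.ker restrict = Submodule.pi (T : Set ι) fun _ => ⊥ := by
    ext v
    simp [restrict, Submodule.mem_pi, funext_iff, LinearMap.funLeft]
  rw [← hker, dualCode, ← LinearMap.ker_prod]
  set Φ := ((dotProductBilin F F).compl₂ C.subtype).prod restrict
  have hrank := LinearMap.finrank_range_add_finrank_ker Φ
  have hrange := Submodule.finrank_le (LinearMap.range Φ)
  rw [finrank_prod, finrank_linearMap_self, finrank_pi, Fintype.card_coe] at hrange
  rw [finrank_pi] at hrank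
  omega

end

theorem Submodule.exists_mem_notMem_span_singleton_of_one_lt_finrank {K V : Type*}
    [DivisionRing K] [AddCommGroup V] [Module K V] {W : Submodule K V} [FiniteDimensional K W]
    (hW : 1 < finrank K W) (u : V) :
    ∃ v ∈ W, v ∉ K ∙ u := by
  rw [← SetLike.not_le_iff_exists]
  intro hle
  have := Submodule.finrank_mono hle
  have : finrank K (K ∙ u) ≤ 1 := by simpa using finrank_span_le_card ({u} : Set V)
  omega

theorem stmt_4_general (q n k : ℕ) (F : Type) [Field F] [Fintype F] [DecidableEq F]
    (hq : Fintype.card F = q)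
    (C : Submodule F (Fin n → F))
    (hdim : Module.finrank F C = k)
    -- the dual code has minimum distance k
    (hdual1 : ∀ u : Fin n → F, (∀ c ∈ C, ∑ i, u i * c i = 0) → u ≠ 0 →
      k ≤ hammingNorm u)
    (hdual2 : ∃ u : Fin n → F, (∀ c ∈ C, ∑ i, u i * c i = 0) ∧ u ≠ 0 ∧
      hammingNorm u = k)
    (hnkq : q < n - k) :
    k ≤ 2 * q := by
  obtain ⟨u, hu_dual, -, hu_wt⟩ := hdual2
  have hu_mem : u ∈ dualCode C := mem_dualCode.2 hu_dual
  have hq_pos : 0 < q := hq ▸ Fintype.card_pos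
  set S : Finset (Fin n) := {i | u i ≠ 0}
  have hSc : #Sᶜ = n - k := by rw [card_compl, Fintype.card_fin]; exact congrArg (n - ·) hu_wt
  obtain ⟨T, hTS, hT⟩ := exists_subset_card_eq (s := Sᶜ) (n := n - k - 2) (by omega)
  set W : Submodule F (Fin n → F) := dualCode C ⊓ Submodule.pi (T : Set (Fin n)) fun _ => ⊥
  have hW : 1 < finrank F W := by
    have : n - k - (n - k - 2) ≤ finrank F W := by
      simpa only [Fintype.card_fin, hdim, hT] using
        card_sub_finrank_sub_card_le_finrank_dualCode_inf_pi C T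
    omega
  obtain ⟨v, ⟨hv_dual, hv_T⟩, hv_span⟩ :=
    Submodule.exists_mem_notMem_span_singleton_of_one_lt_finrank hW u
  have hmin (a : F) : hammingNorm u ≤ hammingNorm (v - a • u) := by
    have hne : v - a • u ≠ 0 := fun h => hv_span <|
      sub_eq_zero.1 h ▸ Submodule.smul_mem _ a (Submodule.mem_span_singleton_self u)
    exact hu_wt ▸ hdual1 _ (mem_dualCode.1 (sub_mem hv_dual (Submodule.smul_mem _ a hu_mem))) hne
  have hout : #{i | u i = 0 ∧ v i ≠ 0} ≤ 2 := by
    calc #{i | u i = 0 ∧ v i ≠ 0} ≤ #(Sᶜ \ T) := by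
          refine card_le_card fun i hi => ?_
          simp only [mem_filter, mem_univ, true_and] at hi
          simp only [S, mem_sdiff, mem_compl, mem_filter, mem_univ, true_and, not_not, hi.1]
          exact fun hiT => hi.2 (Submodule.mem_pi.1 hv_T i hiT)
      _ ≤ 2 := by rw [card_sdiff_of_subset hTS, hSc, hT]; omega
  have := hammingNorm_le_card_mul_of_forall_le_hammingNorm_sub_smul u v 2 hmin hout
  omega

/-- For an [n, k, n−k] near-MDS code over F_q with n − k > q and k ≥ 2, one has k ≤ 2q. -/
theorem stmt_4 (q n k : ℕ) (F : Type) [Field F] [Fintype F] [DecidableEq F]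
    (hq : Fintype.card F = q)
    (C : Submodule F (Fin n → F))
    (hdim : Module.finrank F C = k)
    (hk : 2 ≤ k) (hkn : k ≤ n)
    -- C has minimum distance n − k
    (hd1 : ∀ c ∈ C, c ≠ 0 → n - k ≤ hammingNorm c)
    (hd2 : ∃ c ∈ C, c ≠ 0 ∧ hammingNorm c = n - k)
    -- the dual code has minimum distance k
    (hdual1 : ∀ u : Fin n → F, (∀ c ∈ C, ∑ i, u i * c i = 0) → u ≠ 0 →
      k ≤ hammingNorm u)
    (hdual2 : ∃ u : Fin n → F, (∀ c ∈ C, ∑ i, u i * c i = 0) ∧ u ≠ 0 ∧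
      hammingNorm u = k)
    (hnkq : q < n - k) :
    k ≤ 2 * q :=
  stmt_4_general q n k F hq C hdim hdual1 hdual2 hnkq
end

section
/- Let C be an [n, k, n−k] near-MDS code over F_q with k ≥ 2. Then n ≤ 2q + k. -/
/-- For an [n, k, n−k] near-MDS code over F_q with k ≥ 2, one has n ≤ 2q + k. -/
theorem stmt_5 (q n k : ℕ) (F : Type) [Field F] [Fintype F] [DecidableEq F]
    (hq : Fintype.card F = q)
    (C : Submodule F (Fin n → F))
    (hdim : Module.finrank F C = k)
    (hk : 2 ≤ k) (hkn : k ≤ n)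
    -- C has minimum distance n − k
    (hd1 : ∀ c ∈ C, c ≠ 0 → n - k ≤ hammingNorm c)
    (hd2 : ∃ c ∈ C, c ≠ 0 ∧ hammingNorm c = n - k)
    -- the dual code has minimum distance k
    (hdual1 : ∀ u : Fin n → F, (∀ c ∈ C, ∑ i, u i * c i = 0) → u ≠ 0 →
      k ≤ hammingNorm u)
    (hdual2 : ∃ u : Fin n → F, (∀ c ∈ C, ∑ i, u i * c i = 0) ∧ u ≠ 0 ∧
      hammingNorm u = k) :
    n ≤ 2 * q + k := by
  classical
  obtain ⟨c, hc1, hc2, hc3⟩ := hd2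
  -- support of c
  set S : Finset (Fin n) := Finset.univ.filter (fun i => c i ≠ 0) with hSdef
  have hScard : S.card = n - k := hc3
  have hSccard : Sᶜ.card = k := by
    have := Finset.card_compl S
    simp only [Fintype.card_fin] at this
    omega
  -- choose T' ⊆ Sᶜ with card k - 2
  obtain ⟨T', hT'sub, hT'card⟩ : ∃ T' ⊆ Sᶜ, T'.card = k - 2 :=
    Finset.exists_subset_card_eq (by omega)
  -- the projection map to coordinates in T'
  set L : C →ₗ[F] (↥T' → F) :=
    LinearMap.pi (fun i : ↥T' => (LinearMap.proj (i : Fin n)).comp C.subtype) with hLdef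
  have hrange : Module.finrank F (LinearMap.range L) ≤ k - 2 := by
    have h1 : Module.finrank F (LinearMap.range L) ≤ Module.finrank F (↥T' → F) :=
      Submodule.finrank_le _
    have h2 : Module.finrank F (↥T' → F) = T'.card := by
      rw [Module.finrank_pi F]
      simp
    omega
  have hker : 2 ≤ Module.finrank F (LinearMap.ker L) := by
    have := LinearMap.finrank_range_add_finrank_ker L
    rw [hdim] at this
    omega
  -- c itself lies in ker L since T' ⊆ Sᶜ
  have hczero : ∀ i ∈ T', c i = 0 := by
    intro i hi
    have := hT'sub hi
    simp [hSdef, Finset.mem_compl] at this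
    exact this
  have hcker : (⟨c, hc1⟩ : C) ∈ LinearMap.ker L := by
    rw [LinearMap.mem_ker]
    funext i
    exact hczero i i.2
  -- find x in ker L not a multiple of c
  have hex : ∃ x : C, x ∈ LinearMap.ker L ∧ ¬∃ a : F, (x : Fin n → F) = a • c := by
    by_contra h
    push_neg at h
    set v : ↥(LinearMap.ker L) := ⟨⟨c, hc1⟩, hcker⟩ with hvdef
    have hone : Module.finrank F ↥(LinearMap.ker L) ≤ 1 := by
      apply finrank_le_one v
      intro w
      obtain ⟨a, ha⟩ := h w w.2
      refine ⟨a, ?_⟩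
      apply Subtype.ext; apply Subtype.ext
      have : ((a • v : ↥(LinearMap.ker L)) : Fin n → F) = a • c := rfl
      rw [this, ← ha]
    omega
  obtain ⟨x, hxker, hxna⟩ := hex
  set xv : Fin n → F := (x : Fin n → F) with hxvdef
  have hxC : xv ∈ C := x.2
  have hxT' : ∀ i ∈ T', xv i = 0 := by
    intro i hi
    have := LinearMap.mem_ker.mp hxker
    exact congrFun this ⟨i, hi⟩
  -- fibers
  set fib : F → Finset (Fin n) := fun a => S.filter (fun i => xv i * (c i)⁻¹ = a) with hfibdef
  have hfib2 : ∀ a : F, (fib a).card ≤ 2 := by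
    intro a
    set y : Fin n → F := xv - a • c with hydef
    have hy0 : y ≠ 0 := by
      intro h0
      exact hxna ⟨a, by rw [hydef, sub_eq_zero] at h0; exact h0⟩
    have hyC : y ∈ C := C.sub_mem hxC (C.smul_mem a hc1)
    have hylow : n - k ≤ hammingNorm y := hd1 y hyC hy0
    have hsupp : (Finset.univ.filter (fun i => y i ≠ 0)) ⊆ (S \ fib a) ∪ (Sᶜ \ T') := by
      intro i hi
      simp only [Finset.mem_filter, Finset.mem_univ, true_and] at hi
      by_cases hiS : i ∈ S
      · have hic : c i ≠ 0 := by simpa [hSdef] using hiS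
        have hifib : i ∉ fib a := by
          intro hf
          have : xv i * (c i)⁻¹ = a := (Finset.mem_filter.mp hf).2
          have : xv i = a * c i := by field_simp at this ⊢; linear_combination this
          apply hi
          simp [hydef, this, mul_comm]
        exact Finset.mem_union_left _ (Finset.mem_sdiff.mpr ⟨hiS, hifib⟩)
      · have hiT' : i ∉ T' := by
          intro hT
          have hc0 : c i = 0 := by
            have := hT'sub hT
            simpa [hSdef, Finset.mem_compl] using this
          apply hi
          simp [hydef, hxT' i hT, hc0]
        exact Finset.mem_union_right _
          (Finset.mem_sdiff.mpr ⟨Finset.mem_compl.mpr hiS, hiT'⟩)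
    have hcard : hammingNorm y ≤ (S.card - (fib a).card) + (Sᶜ.card - T'.card) := by
      calc hammingNorm y ≤ ((S \ fib a) ∪ (Sᶜ \ T')).card := Finset.card_le_card hsupp
        _ ≤ (S \ fib a).card + (Sᶜ \ T').card := Finset.card_union_le _ _
        _ = (S.card - (fib a).card) + (Sᶜ.card - T'.card) := by
            rw [Finset.card_sdiff_of_subset (Finset.filter_subset _ _), Finset.card_sdiff_of_subset hT'sub]
    have hfibS : (fib a).card ≤ S.card := Finset.card_le_card (Finset.filter_subset _ _)
    omega
  have hsum : S.card = ∑ a : F, (fib a).card :=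
    Finset.card_eq_sum_card_fiberwise (fun i _ => Finset.mem_univ (xv i * (c i)⁻¹))
  have : S.card ≤ 2 * q := by
    rw [hsum]
    calc ∑ a : F, (fib a).card ≤ ∑ _a : F, 2 := Finset.sum_le_sum (fun a _ => hfib2 a)
      _ = 2 * q := by rw [Finset.sum_const, Finset.card_univ, hq]; ring
  omega
end

section
/- Let C be an [n, k, n−k] near-MDS code over F_q with weight distribution (A_0, …, A_n). Then for each s ∈ {1, …, k}, A_{n−k+s} = C(n, k−s) · Σ_{j=0}^{s−1} (−1)^j C(n−k+s, j)(q^{s−j} − 1) + (−1)^s C(k, s) A_{n−k}. -/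
/-!
For `|T| = n - k + s` the subcode of words vanishing outside `T` has dimension exactly `s`:
restriction to the `k - s` coordinates outside `T` is onto, since otherwise a nonzero dual word
supported there would have weight `< k`. Counting pairs `(T, c)` with `supp c ⊆ T` in two ways
and using that nonzero codewords have weight `≥ n - k` gives, for `1 ≤ s ≤ k`,
`∑_{i ≤ s} C(k - i, s - i) A_{n-k+i} = C(n, k - s) (q^s - 1)`.
This triangular system is solved by binomial inversion.
-/

open Finset

theorem sum_Ico_neg_one_pow_mul_choose {R : Type*} [CommRing R] (l s : ℕ) :
    ∑ i ∈ Ico l (s + 1), (-1 : R) ^ (s - i) * ((s - l).choose (i - l) : R) =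
      if l = s then 1 else 0 := by
  rcases lt_or_ge s l with h | h
  · rw [Ico_eq_empty (by omega), sum_empty, if_neg (by omega)]
  calc ∑ i ∈ Ico l (s + 1), (-1 : R) ^ (s - i) * ((s - l).choose (i - l) : R)
      = ∑ j ∈ range (s - l + 1), 1 ^ j * (-1 : R) ^ (s - l - j) * ((s - l).choose j : R) := by
        rw [sum_Ico_eq_sum_range, show s + 1 - l = s - l + 1 by omega]
        refine sum_congr rfl fun j _ => ?_
        rw [one_pow, one_mul, Nat.add_sub_cancel_left, Nat.sub_sub]
    _ = (1 + -1 : R) ^ (s - l) := (add_pow _ _ _).symm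
    _ = if l = s then 1 else 0 := by
        rw [add_neg_cancel, zero_pow_eq]
        exact if_congr (by omega) rfl rfl

theorem Nat.choose_sub_mul_choose_sub {N l i s : ℕ} (hli : l ≤ i) (his : i ≤ s) :
    (N - l).choose (i - l) * (N - i).choose (s - i) =
      (N - l).choose (s - l) * (s - l).choose (i - l) := by
  rw [Nat.choose_mul (by omega), show N - l - (i - l) = N - i by omega,
    show s - l - (i - l) = s - i by omega]

theorem binomial_inversion {R : Type*} [CommRing R] {N : ℕ} {f g : ℕ → R}
    (hg : ∀ t ≤ N, g t = ∑ i ∈ range (t + 1), ((N - i).choose (t - i) : R) * f i)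
    {s : ℕ} (hs : s ≤ N) :
    f s = ∑ i ∈ range (s + 1), (-1) ^ (s - i) * ((N - i).choose (s - i) : R) * g i := by
  symm
  calc ∑ i ∈ range (s + 1), (-1) ^ (s - i) * ((N - i).choose (s - i) : R) * g i
      = ∑ i ∈ range (s + 1), ∑ l ∈ range (i + 1),
          (N - l).choose (s - l) * f l * ((-1) ^ (s - i) * ((s - l).choose (i - l) : R)) := by
        refine sum_congr rfl fun i hi => ?_
        have his := mem_range_succ_iff.mp hi
        rw [hg i (his.trans hs), mul_sum]
        refine sum_congr rfl fun l hl => ?_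
        have := congrArg (Nat.cast : ℕ → R)
          (Nat.choose_sub_mul_choose_sub (N := N) (mem_range_succ_iff.mp hl) his)
        push_cast at this
        linear_combination (f l * (-1) ^ (s - i)) * this
    _ = ∑ l ∈ range (s + 1), (N - l).choose (s - l) * f l *
          ∑ i ∈ Ico l (s + 1), (-1) ^ (s - i) * ((s - l).choose (i - l) : R) := by
        simp only [range_eq_Ico, mul_sum]
        exact (sum_Ico_Ico_comm 0 (s + 1) _).symm
    _ = f s := by
        simp only [sum_Ico_neg_one_pow_mul_choose, mul_ite, mul_one, mul_zero, sum_ite_eq',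
          mem_range, Nat.lt_succ_self, if_true, Nat.sub_self, Nat.choose_zero_right,
          Nat.cast_one, one_mul]

theorem Nat.choose_mul_choose_sub_eq {n k s l : ℕ} (hls : l ≤ s) (hsk : s ≤ k) (hkn : k ≤ n) :
    n.choose (k - l) * (k - l).choose (s - l) = n.choose (k - s) * (n - k + s).choose (s - l) := by
  rw [← Nat.choose_symm_of_eq_add (show k - l = k - s + (s - l) by omega),
    Nat.choose_mul (by omega), show n - (k - s) = n - k + s by omega,
    show k - l - (k - s) = s - l by omega]

theorem eq_of_sum_choose_mul_eq (q n k : ℕ) (hkn : k ≤ n) (a : ℕ → ℤ)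
    (hsys : ∀ t, 1 ≤ t → t ≤ k →
      ∑ i ∈ range (t + 1), ((k - i).choose (t - i) : ℤ) * a i =
        n.choose (k - t) * ((q : ℤ) ^ t - 1))
    {s : ℕ} (hsk : s ≤ k) :
    a s = n.choose (k - s) *
        ∑ j ∈ range s, (-1) ^ j * ((n - k + s).choose j : ℤ) * ((q : ℤ) ^ (s - j) - 1)
      + (-1) ^ s * (k.choose s : ℤ) * a 0 := by
  -- the system extended by the trivial equation `a 0 = a 0` at `t = 0`
  set g : ℕ → ℤ := fun t => if t = 0 then a 0 else n.choose (k - t) * ((q : ℤ) ^ t - 1)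
  have hg : ∀ t ≤ k, g t = ∑ i ∈ range (t + 1), ((k - i).choose (t - i) : ℤ) * a i := by
    rintro (_ | t) ht
    · simp [g]
    · simp only [g, if_neg t.succ_ne_zero, hsys (t + 1) t.succ_pos ht]
  rw [binomial_inversion hg hsk, sum_range_succ', mul_sum, ← sum_range_reflect]
  simp only [g, if_pos rfl, if_neg (Nat.succ_ne_zero _), Nat.sub_zero]
  congr 1
  refine sum_congr rfl fun i hi => ?_
  have his := mem_range.mp hi
  have := congrArg (Nat.cast : ℕ → ℤ)
    (Nat.choose_mul_choose_sub_eq (n := n) (l := s - i) (by omega) hsk hkn)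
  push_cast at this
  rw [show s - 1 - i + 1 = s - i by omega]
  rw [show s - (s - i) = i by omega] at this ⊢
  linear_combination ((-1) ^ i * ((q : ℤ) ^ (s - i) - 1)) * this

section DoubleCounting

variable {ι M : Type*} [Fintype ι] [DecidableEq ι] [Zero M] [DecidableEq M]

theorem card_powersetCard_filter_support_subset (x : ι → M) (m : ℕ) :
    #{T ∈ powersetCard m univ | ∀ i ∉ T, x i = 0} =
      if hammingNorm x ≤ m then (Fintype.card ι - hammingNorm x).choose (m - hammingNorm x)
      else 0 := by
  have hsupp : ∀ T : Finset ι, (∀ i ∉ T, x i = 0) ↔ ({i | x i ≠ 0} : Finset ι) ⊆ T := fun T => by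
    simp only [subset_iff, mem_filter, mem_univ, true_and]
    exact forall_congr' fun i => not_imp_comm
  simp_rw [hsupp]
  split_ifs with hm
  · exact card_filter_powersetCard_subset _ _ _ (subset_univ _) hm
  · refine card_eq_zero.mpr (filter_eq_empty_iff.mpr fun T hT hsub => hm ?_)
    exact (card_le_card hsub).trans (mem_powersetCard.mp hT).2.le

theorem sum_card_filter_support_subset (X : Finset (ι → M)) (m : ℕ) :
    ∑ T ∈ powersetCard m univ, #{x ∈ X | ∀ i ∉ T, x i = 0} =
      ∑ t ∈ range (m + 1), #{x ∈ X | hammingNorm x = t} * (Fintype.card ι - t).choose (m - t) := by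
  calc ∑ T ∈ powersetCard m univ, #{x ∈ X | ∀ i ∉ T, x i = 0}
      = ∑ x ∈ X, #{T ∈ powersetCard m univ | ∀ i ∉ T, x i = 0} :=
        (sum_card_bipartiteAbove_eq_sum_card_bipartiteBelow _).symm
    _ = ∑ x ∈ X with hammingNorm x ∈ range (m + 1),
          (Fintype.card ι - hammingNorm x).choose (m - hammingNorm x) := by
        simp only [card_powersetCard_filter_support_subset, sum_filter, mem_range_succ_iff]
    _ = _ := by
        rw [← sum_fiberwise_eq_sum_filter' X _ hammingNorm
          fun t => (Fintype.card ι - t).choose (m - t)]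
        simp only [sum_const, smul_eq_mul]

end DoubleCounting

section LinearCode

variable {F ι : Type*} [Field F] [DecidableEq F] [Fintype ι]
  (C : Submodule F (ι → F)) {d : ℕ}

noncomputable def weightDistribution (w : ℕ) : ℕ :=
  Nat.card {c // c ∈ C ∧ hammingNorm c = w}

theorem weightDistribution_zero : weightDistribution C 0 = 1 :=
  Nat.card_eq_one_iff_exists.mpr ⟨⟨0, C.zero_mem, hammingNorm_zero⟩,
    fun c => Subtype.ext (hammingNorm_eq_zero.mp c.2.2)⟩

theorem weightDistribution_eq_zero_of_lt {w : ℕ}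
    (hd : ∀ c ∈ C, c ≠ 0 → d ≤ hammingNorm c) (hw0 : w ≠ 0) (hwd : w < d) :
    weightDistribution C w = 0 :=
  Nat.card_eq_zero.mpr <| .inl ⟨fun ⟨c, hc, hcw⟩ =>
    absurd (hd c hc (hammingNorm_ne_zero_iff.mp (hcw ▸ hw0))) (by omega)⟩

variable [DecidableEq ι] {C}

theorem surjective_restrict_of_card_lt_dual_distance
    (hdual : ∀ u : ι → F, (∀ c ∈ C, ∑ i, u i * c i = 0) → u ≠ 0 → d ≤ hammingNorm u)
    (S : Finset ι) (hS : #S < d) :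
    Function.Surjective ((LinearMap.funLeft F F ((↑) : S → ι)).comp C.subtype) := by
  set ρ := LinearMap.funLeft F F ((↑) : S → ι)
  rw [← LinearMap.range_eq_top]
  by_contra hne
  obtain ⟨f, hf0, hfrange⟩ :=
    Submodule.exists_dual_map_eq_bot_of_lt_top (lt_top_iff_ne_top.mpr hne) inferInstance
  set u := (dotProductEquiv F ι).symm (f ∘ₗ ρ)
  have hu : ∀ x, ∑ i, u i * x i = f (ρ x) := fun x =>
    LinearMap.congr_fun ((dotProductEquiv F ι).apply_symm_apply (f ∘ₗ ρ)) x
  have horth : ∀ c ∈ C, ∑ i, u i * c i = 0 := fun c hc => by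
    rw [hu, ← Submodule.mem_bot F, ← hfrange]
    exact Submodule.mem_map_of_mem ⟨⟨c, hc⟩, rfl⟩
  have hu0 : u ≠ 0 := by
    refine (LinearEquiv.map_ne_zero_iff _).mpr fun hfρ => hf0 ?_
    exact (LinearMap.cancel_right (LinearMap.funLeft_surjective_of_injective F F _
      Subtype.val_injective)).mp (hfρ.trans (LinearMap.zero_comp ρ).symm)
  have hsupp : hammingNorm u ≤ #S := by
    refine card_le_card fun i hi => ?_
    by_contra hiS
    refine (mem_filter.mp hi).2 ?_
    have hρ : ρ (Pi.single i 1) = 0 := funext fun j =>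
      Pi.single_eq_of_ne (fun h : (j : ι) = i => hiS (h ▸ j.2)) 1
    simp only [u, dotProductEquiv_symm_apply, LinearMap.coe_single, LinearMap.coe_comp,
      Function.comp_apply, hρ, map_zero]
  exact absurd (hdual u horth hu0) (by omega)

theorem natCard_shortening_of_card_compl_lt [Finite F]
    (hdual : ∀ u : ι → F, (∀ c ∈ C, ∑ i, u i * c i = 0) → u ≠ 0 → d ≤ hammingNorm u)
    (T : Finset ι) (hT : #Tᶜ < d) :
    Nat.card {c // c ∈ C ∧ ∀ i ∉ T, c i = 0} = Nat.card F ^ (Module.finrank F C - #Tᶜ) := by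
  set ψ := (LinearMap.funLeft F F ((↑) : ↥Tᶜ → ι)).comp C.subtype
  have hker : Module.finrank F (LinearMap.ker ψ) = Module.finrank F C - #Tᶜ := by
    have := LinearMap.finrank_range_add_finrank_ker ψ
    rw [LinearMap.range_eq_top.mpr (surjective_restrict_of_card_lt_dual_distance hdual Tᶜ hT),
      finrank_top, Module.finrank_fintype_fun_eq_card, Fintype.card_coe] at this
    omega
  have e : LinearMap.ker ψ ≃ {c : ι → F // c ∈ C ∧ ∀ i ∉ T, c i = 0} :=
    (Equiv.subtypeEquivRight fun c => by
      simp only [ψ, LinearMap.mem_ker, LinearMap.coe_comp, Submodule.coe_subtype,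
        Function.comp_apply, funext_iff, LinearMap.funLeft_apply, Pi.zero_apply,
        Subtype.forall, mem_compl]).trans
      (Equiv.subtypeSubtypeEquivSubtypeInter (· ∈ C) fun c => ∀ i ∉ T, c i = 0)
  rw [← Nat.card_congr e, Module.natCard_eq_pow_finrank (K := F), hker]

variable (C)

theorem sum_natCard_shortening [Fintype F] (m : ℕ) :
    ∑ T ∈ powersetCard m univ, Nat.card {c // c ∈ C ∧ ∀ i ∉ T, c i = 0} =
      ∑ t ∈ range (m + 1), weightDistribution C t * (Fintype.card ι - t).choose (m - t) := by
  classical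
  have hcard : ∀ (p : (ι → F) → Prop) [DecidablePred p],
      #{c ∈ ({c | c ∈ C} : Finset (ι → F)) | p c} = Nat.card {c // c ∈ C ∧ p c} := fun p _ => by
    rw [filter_filter, Nat.card_eq_fintype_card, Fintype.card_subtype]
  simpa only [hcard, weightDistribution] using sum_card_filter_support_subset {c | c ∈ C} m

theorem choose_mul_pow_eq_sum_weightDistribution [Fintype F] {k : ℕ}
    (hdim : Module.finrank F C = k) (hk : k < Fintype.card ι)
    (hd : ∀ c ∈ C, c ≠ 0 → Fintype.card ι - k ≤ hammingNorm c)
    (hdual : ∀ u : ι → F, (∀ c ∈ C, ∑ i, u i * c i = 0) → u ≠ 0 → k ≤ hammingNorm u)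
    {t : ℕ} (ht : 1 ≤ t) (htk : t ≤ k) :
    (Fintype.card ι).choose (k - t) * Fintype.card F ^ t =
      (Fintype.card ι).choose (k - t) + ∑ i ∈ range (t + 1),
        (k - i).choose (t - i) * weightDistribution C (Fintype.card ι - k + i) := by
  have hcount := sum_natCard_shortening C (Fintype.card ι - k + t)
  obtain ⟨n, hn⟩ : ∃ n, Fintype.card ι = n := ⟨_, rfl⟩
  rw [hn] at hk hd hcount ⊢
  have hshort : ∀ T ∈ powersetCard (n - k + t) univ,
      Nat.card {c // c ∈ C ∧ ∀ i ∉ T, c i = 0} = Fintype.card F ^ t := fun T hT => by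
    have hTc : #Tᶜ = k - t := by rw [card_compl, (mem_powersetCard.mp hT).2]; omega
    rw [natCard_shortening_of_card_compl_lt hdual T (by omega), hTc, hdim,
      Nat.card_eq_fintype_card, show k - (k - t) = t by omega]
  -- the only codeword of weight below `n - k` is `0`
  have hlow : ∑ w ∈ range (n - k), weightDistribution C w * (n - w).choose (n - k + t - w)
      = n.choose (n - k + t) := by
    rw [sum_eq_single_of_mem 0 (mem_range.mpr (by omega)) fun w hw hw0 => by
      rw [weightDistribution_eq_zero_of_lt C hd hw0 (mem_range.mp hw), zero_mul]]
    rw [weightDistribution_zero, one_mul, Nat.sub_zero, Nat.sub_zero]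
  rw [sum_congr rfl hshort, sum_const, card_powersetCard, card_univ, hn, smul_eq_mul,
    show n - k + t + 1 = (n - k) + (t + 1) by omega, sum_range_add, hlow] at hcount
  rw [Nat.choose_symm_of_eq_add (show n = k - t + (n - k + t) by omega), hcount]
  congr 1
  refine sum_congr rfl fun i _ => ?_
  rw [mul_comm, show n - (n - k + i) = k - i by omega,
    show n - k + t - (n - k + i) = t - i by omega]

end LinearCode

theorem stmt_7_general (q n k : ℕ) (F : Type) [Field F] [Fintype F] [DecidableEq F]
    (hq : Fintype.card F = q)
    (C : Submodule F (Fin n → F))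
    (hdim : Module.finrank F C = k)
    (hkn : k ≤ n)
    (hd1 : ∀ c ∈ C, c ≠ 0 → n - k ≤ hammingNorm c)
    (hd2 : ∃ c ∈ C, c ≠ 0 ∧ hammingNorm c = n - k)
    (hdual1 : ∀ u : Fin n → F, (∀ c ∈ C, ∑ i, u i * c i = 0) → u ≠ 0 →
      k ≤ hammingNorm u)
    (A : ℕ → ℕ)
    (hA : ∀ i, A i = Nat.card {c : Fin n → F // c ∈ C ∧ hammingNorm c = i}) :
    ∀ s, 1 ≤ s → s ≤ k →
      (A (n - k + s) : ℤ)
        = (Nat.choose n (k - s) : ℤ) *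
            (∑ j ∈ Finset.range s,
              (-1 : ℤ) ^ j * (Nat.choose (n - k + s) j : ℤ) *
                ((q : ℤ) ^ (s - j) - 1))
          + (-1 : ℤ) ^ s * (Nat.choose k s : ℤ) * (A (n - k) : ℤ) := by
  intro s _ hsk
  obtain rfl : A = weightDistribution C := funext hA
  subst hq
  have hkn' : k < n := by
    obtain ⟨c, -, hc0, hcw⟩ := hd2
    have := hammingNorm_pos_iff.mpr hc0
    omega
  refine eq_of_sum_choose_mul_eq _ n k hkn (fun i => weightDistribution C (n - k + i))
    (fun t ht htk => ?_) hsk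
  have := choose_mul_pow_eq_sum_weightDistribution C hdim (by simpa using hkn')
    (by simpa using hd1) hdual1 ht htk
  simp only [Fintype.card_fin] at this
  have := congrArg (Nat.cast : ℕ → ℤ) this
  push_cast at this
  linear_combination -this

/-- Weight distribution of a near-MDS [n, k, n−k] code over F_q. -/
theorem stmt_7 (q n k : ℕ) (F : Type) [Field F] [Fintype F] [DecidableEq F]
    (hq : Fintype.card F = q)
    (C : Submodule F (Fin n → F))
    (hdim : Module.finrank F C = k)
    (hk : 1 ≤ k) (hkn : k ≤ n)
    (hd1 : ∀ c ∈ C, c ≠ 0 → n - k ≤ hammingNorm c)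
    (hd2 : ∃ c ∈ C, c ≠ 0 ∧ hammingNorm c = n - k)
    (hdual1 : ∀ u : Fin n → F, (∀ c ∈ C, ∑ i, u i * c i = 0) → u ≠ 0 →
      k ≤ hammingNorm u)
    (hdual2 : ∃ u : Fin n → F, (∀ c ∈ C, ∑ i, u i * c i = 0) ∧ u ≠ 0 ∧
      hammingNorm u = k)
    (A : ℕ → ℕ)
    (hA : ∀ i, A i = Nat.card {c : Fin n → F // c ∈ C ∧ hammingNorm c = i}) :
    ∀ s, 1 ≤ s → s ≤ k →
      (A (n - k + s) : ℤ)
        = (Nat.choose n (k - s) : ℤ) *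
            (∑ j ∈ Finset.range s,
              (-1 : ℤ) ^ j * (Nat.choose (n - k + s) j : ℤ) *
                ((q : ℤ) ^ (s - j) - 1))
          + (-1 : ℤ) ^ s * (Nat.choose k s : ℤ) * (A (n - k) : ℤ) :=
  stmt_7_general q n k F hq C hdim hkn hd1 hd2 hdual1 A hA
end

section
/- Let p be an odd prime, m ≥ 1, and G = (Z/pZ)^m. For every x ∈ G and every 1 ≤ k ≤ p^m, the number of k-subsets of G summing to x is positive, except in the single case k = p^m and x ≠ 0. -/
open Finset
lemma neg_eq_self_zero {p : ℕ} (hp : p.Prime) (hodd : Odd p) {a : ZMod p} (h : a = -a) : a = 0 := by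
  haveI : Fact p.Prime := ⟨hp⟩
  have h2 : (2 : ZMod p) * a = 0 := by linear_combination h
  rcases mul_eq_zero.mp h2 with h2 | h2
  · exfalso
    have h3 : ((2:ℕ) : ZMod p) = 0 := by exact_mod_cast h2
    have h4 := (ZMod.natCast_eq_zero_iff 2 p).mp h3
    have hp2 := (Nat.prime_dvd_prime_iff_eq hp Nat.prime_two).mp h4
    have := Nat.odd_iff.mp hodd
    omega
  · exact h2

lemma zmod_sum_zero {p : ℕ} [NeZero p] (hp : p.Prime) (hodd : Odd p) : ∑ c : ZMod p, c = 0 := by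
  have h : ∑ c : ZMod p, c = -(∑ c : ZMod p, c) := by
    rw [← Finset.sum_neg_distrib]
    exact Fintype.sum_equiv (Equiv.neg _) _ _ (fun c => (neg_neg c).symm)
  exact neg_eq_self_zero hp hodd h

lemma pi_sum_zero {p m : ℕ} [NeZero p] (hp : p.Prime) (hodd : Odd p) :
    ∑ v : Fin m → ZMod p, v = 0 := by
  have h : ∑ v : Fin m → ZMod p, v = -(∑ v : Fin m → ZMod p, v) := by
    rw [← Finset.sum_neg_distrib]
    exact Fintype.sum_equiv (Equiv.neg _) _ _ (fun c => (neg_neg c).symm)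
  funext j
  have hj : (∑ v : Fin m → ZMod p, v) j = -((∑ v : Fin m → ZMod p, v) j) := by
    conv_lhs => rw [h]
    simp
  exact neg_eq_self_zero hp hodd hj



lemma coset_construct {p m : ℕ} [NeZero p] (hp : p.Prime) (hodd : Odd p) (i : Fin m)
    (R' : Finset (Fin m → ZMod p)) (hR' : ∀ r ∈ R', r i = 0) :
    ∃ T : Finset (Fin m → ZMod p), T.card = R'.card * p ∧ (∑ t ∈ T, t) = 0 ∧
      ∀ v, v ∈ T ↔ v - v i • (Pi.single i 1 : Fin m → ZMod p) ∈ R' := by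
  set E : Fin m → ZMod p := Pi.single i (1 : ZMod p) with hEdef
  have hEi : E i = 1 := Pi.single_eq_same i 1
  have happ : ∀ (r : Fin m → ZMod p) (c : ZMod p), r i = 0 → (r + c • E) i = c := by
    intro r c hr
    simp [hr, hEi]
  set f : ((Fin m → ZMod p) × ZMod p) → (Fin m → ZMod p) := fun rc => rc.1 + rc.2 • E with hfdef
  have hinj : ∀ a ∈ R' ×ˢ (univ : Finset (ZMod p)), ∀ b ∈ R' ×ˢ univ, f a = f b → a = b := by
    rintro ⟨r₁, c₁⟩ h₁ ⟨r₂, c₂⟩ h₂ heq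
    have hr₁ : r₁ i = 0 := hR' _ (mem_product.mp h₁).1
    have hr₂ : r₂ i = 0 := hR' _ (mem_product.mp h₂).1
    have hc : c₁ = c₂ := by
      have h3 := congrFun heq i
      have e1 : f (r₁, c₁) i = c₁ := happ _ _ hr₁
      have e2 : f (r₂, c₂) i = c₂ := happ _ _ hr₂
      rw [e1, e2] at h3
      exact h3
    have hr : r₁ = r₂ := by
      have : r₁ + c₁ • E = r₂ + c₂ • E := heq
      rw [hc] at this
      exact add_right_cancel this
    simp [hr, hc]
  refine ⟨(R' ×ˢ (univ : Finset (ZMod p))).image f, ?_, ?_, ?_⟩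
  · rw [Finset.card_image_of_injOn hinj, Finset.card_product, Finset.card_univ, ZMod.card]
  · rw [Finset.sum_image hinj, Finset.sum_product]
    have inner : ∀ r ∈ R', ∑ c : ZMod p, f (r, c) = 0 := by
      intro r _
      show ∑ c : ZMod p, (r + c • E) = 0
      rw [Finset.sum_add_distrib, Finset.sum_const, ← Finset.sum_smul,
        zmod_sum_zero hp hodd, zero_smul, add_zero, Finset.card_univ, ZMod.card]
      funext j
      simp [nsmul_eq_mul, ZMod.natCast_self]
    exact Finset.sum_eq_zero inner
  · intro v
    rw [Finset.mem_image]
    constructor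
    · rintro ⟨⟨r, c⟩, hmem, heq⟩
      have hr : r i = 0 := hR' _ (mem_product.mp hmem).1
      have hvi : v i = c := by rw [← heq]; exact happ _ _ hr
      have h4 : v - v i • E = r := by
        rw [hvi, ← heq]
        show r + c • E - c • E = r
        simp
      rw [h4]
      exact (mem_product.mp hmem).1
    · intro hmem
      refine ⟨(v - v i • E, v i), mem_product.mpr ⟨hmem, mem_univ _⟩, ?_⟩
      simp [hfdef]


lemma card_R {p m : ℕ} [NeZero p] (hp : p.Prime) (hodd : Odd p) (i : Fin m) :
    (Finset.univ.filter fun v : Fin m → ZMod p => v i = 0).card * p = p ^ m := by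
  obtain ⟨T, hcard, _, hmem⟩ := coset_construct hp hodd i
    (Finset.univ.filter fun v : Fin m → ZMod p => v i = 0)
    (fun r hr => (Finset.mem_filter.mp hr).2)
  have hT : T = Finset.univ := by
    apply Finset.eq_univ_iff_forall.mpr
    intro v
    apply (hmem v).mpr
    apply Finset.mem_filter.mpr
    refine ⟨Finset.mem_univ _, ?_⟩
    simp [Pi.single_eq_same]
  rw [hT, Finset.card_univ] at hcard
  rw [← hcard]
  simp [ZMod.card]

/-- In G = (Z/pZ)^m with p an odd prime, the number of k-subsets of G summing
to x is positive, except exactly when k = p^m and x ≠ 0. -/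
theorem stmt_10 (p m : ℕ) (hp : p.Prime) (hodd : Odd p) (hm : 1 ≤ m)
    (x : Fin m → ZMod p) (k : ℕ) (hk1 : 1 ≤ k) (hk2 : k ≤ p ^ m) :
    0 < Nat.card {T : Finset (Fin m → ZMod p) // T.card = k ∧ ∑ t ∈ T, t = x}
      ↔ ¬(k = p ^ m ∧ x ≠ 0) := by
  haveI : NeZero p := ⟨hp.pos.ne'⟩
  haveI : Fact p.Prime := ⟨hp⟩
  have hcardV : Fintype.card (Fin m → ZMod p) = p ^ m := by simp [ZMod.card]
  rw [Nat.card_pos_iff]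
  constructor
  · rintro ⟨⟨T, hTcard, hTsum⟩, -⟩ ⟨rfl, hx⟩
    have hT : T = Finset.univ := Finset.eq_univ_of_card T (by rw [hTcard, hcardV])
    rw [hT] at hTsum
    exact hx (by rw [← hTsum, pi_sum_zero hp hodd])
  · intro h
    refine ⟨?_, Finite.of_injective (fun T => T.1) fun a b hab => Subtype.ext hab⟩
    suffices hex : ∃ T : Finset (Fin m → ZMod p), T.card = k ∧ ∑ t ∈ T, t = x by
      obtain ⟨T, h1, h2⟩ := hex
      exact ⟨⟨T, h1, h2⟩⟩
    by_cases hdvd : p ∣ k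
    · -- p divides k
      have hpk : p ≤ k := Nat.le_of_dvd (by omega) hdvd
      by_cases hkeq : k = p ^ m
      · -- whole group; x must be 0
        have hx0 : x = 0 := by
          by_contra hx
          exact h ⟨hkeq, hx⟩
        refine ⟨Finset.univ, by rw [Finset.card_univ, hcardV, hkeq], ?_⟩
        rw [hx0]
        exact pi_sum_zero hp hodd
      · have hklt : k < p ^ m := lt_of_le_of_ne hk2 hkeq
        obtain ⟨j, hj⟩ := hdvd
        have hj1 : 1 ≤ j := by
          rcases Nat.eq_zero_or_pos j with h0 | h0
          · subst h0; simp at hj; omega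
          · exact h0
        by_cases hx : x = 0
        · -- zero-sum coset union
          have hRcard := card_R hp hodd (⟨0, hm⟩ : Fin m)
          have hjR : j ≤ (Finset.univ.filter
              fun v : Fin m → ZMod p => v ⟨0, hm⟩ = 0).card := by
            have h2 : j * p ≤ (Finset.univ.filter
                fun v : Fin m → ZMod p => v ⟨0, hm⟩ = 0).card * p := by
              rw [hRcard, Nat.mul_comm, ← hj]; exact hk2
            exact Nat.le_of_mul_le_mul_right h2 hp.pos
          obtain ⟨R', hR'sub, hR'card⟩ := Finset.exists_subset_card_eq hjR
          obtain ⟨T, hTcard, hTsum, -⟩ := coset_construct hp hodd (⟨0, hm⟩ : Fin m) R'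
            (fun r hr => (Finset.mem_filter.mp (hR'sub hr)).2)
          exact ⟨T, by rw [hTcard, hR'card, Nat.mul_comm, ← hj], by rw [hTsum, hx]⟩
        · -- nonzero target, swap trick
          have hm2 : 2 ≤ m := by
            by_contra hcon
            interval_cases m
            · rw [pow_one] at hklt; omega
          obtain ⟨i₀, hi₀⟩ := Function.ne_iff.mp hx
          have hi₀' : x i₀ ≠ 0 := by simpa using hi₀
          haveI : Nontrivial (Fin m) :=
            Fin.nontrivial_iff_two_le.mpr hm2
          obtain ⟨i, hii₀⟩ := exists_ne i₀
          set E : Fin m → ZMod p := Pi.single i 1 with hEdef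
          set rx : Fin m → ZMod p := x - x i • E with hrxdef
          have hrxi : rx i = 0 := by simp [hrxdef, hEdef, Pi.single_eq_same]
          have hrxne : rx ≠ 0 := by
            intro hcon
            apply hi₀'
            have h5 := congrFun hcon i₀
            simpa [hrxdef, hEdef, Pi.single_eq_of_ne (Ne.symm hii₀)] using h5
          have hRcard := card_R hp hodd i
          have hrxR : rx ∈ Finset.univ.filter (fun v : Fin m → ZMod p => v i = 0) :=
            Finset.mem_filter.mpr ⟨Finset.mem_univ _, hrxi⟩
          have h0R : (0 : Fin m → ZMod p) ∈
              Finset.univ.filter (fun v : Fin m → ZMod p => v i = 0) :=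
            Finset.mem_filter.mpr ⟨Finset.mem_univ _, rfl⟩
          have hjR : j < (Finset.univ.filter
              (fun v : Fin m → ZMod p => v i = 0)).card := by
            have h2 : j * p < (Finset.univ.filter
                (fun v : Fin m → ZMod p => v i = 0)).card * p := by
              rw [hRcard, Nat.mul_comm, ← hj]; exact hklt
            exact Nat.lt_of_mul_lt_mul_right h2
          have harg1 : ({0} : Finset (Fin m → ZMod p)) ⊆
              (Finset.univ.filter (fun v : Fin m → ZMod p => v i = 0)).erase rx := by
            intro a ha
            rw [Finset.mem_singleton] at ha
            subst ha
            exact Finset.mem_erase.mpr ⟨Ne.symm hrxne, h0R⟩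
          have harg2 : ({0} : Finset (Fin m → ZMod p)).card ≤ j := by
            simpa using hj1
          have harg3 : j ≤
              ((Finset.univ.filter (fun v : Fin m → ZMod p => v i = 0)).erase rx).card := by
            rw [Finset.card_erase_of_mem hrxR]
            exact Nat.le_sub_one_of_lt hjR
          obtain ⟨R', h0R', hR'sub, hR'card⟩ :=
            Finset.exists_subsuperset_card_eq harg1 harg2 harg3
          have hR'R : ∀ r ∈ R', r i = 0 := fun r hr =>
            (Finset.mem_filter.mp (Finset.mem_of_mem_erase (hR'sub hr))).2
          obtain ⟨T, hTcard, hTsum, hTmem⟩ := coset_construct hp hodd i R' hR'R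
          have h0T : (0 : Fin m → ZMod p) ∈ T := by
            apply (hTmem 0).mpr
            have h6 : (0 : Fin m → ZMod p) - (0 : Fin m → ZMod p) i •
                (Pi.single i 1 : Fin m → ZMod p) = 0 := by simp
            rw [h6]
            exact h0R' (Finset.mem_singleton_self _)
          have hxT : x ∉ T := by
            intro hcon
            have h7 := (hTmem x).mp hcon
            have h8 : x - x i • (Pi.single i 1 : Fin m → ZMod p) = rx := rfl
            rw [h8] at h7
            exact (Finset.notMem_erase rx _) (hR'sub h7)
          refine ⟨insert x (T.erase 0), ?_, ?_⟩
          · rw [Finset.card_insert_of_notMem (fun hcon => hxT (Finset.mem_of_mem_erase hcon)),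
              Finset.card_erase_of_mem h0T, hTcard, hR'card]
            have h9 : 1 ≤ j * p := Nat.mul_le_mul hj1 hp.one_lt.le
            rw [Nat.sub_add_cancel h9, Nat.mul_comm, ← hj]
          · rw [Finset.sum_insert (fun hcon => hxT (Finset.mem_of_mem_erase hcon)),
              Finset.sum_erase T (rfl : (0 : Fin m → ZMod p) = 0), hTsum, add_zero]
    · -- p does not divide k: translate any k-set
      have hk0 : (k : ZMod p) ≠ 0 := fun hcon =>
        hdvd ((ZMod.natCast_eq_zero_iff k p).mp hcon)
      obtain ⟨T₀, -, hT₀card⟩ :=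
        Finset.exists_subset_card_eq
          (show k ≤ (Finset.univ : Finset (Fin m → ZMod p)).card by
            rw [Finset.card_univ, hcardV]; exact hk2)
      set s : Fin m → ZMod p := ∑ t ∈ T₀, t with hs
      set g : Fin m → ZMod p := ((k : ZMod p)⁻¹) • (x - s) with hg
      have hinj : ∀ a ∈ T₀, ∀ b ∈ T₀, a + g = b + g → a = b := by
        intro a _ b _ hab
        exact add_right_cancel hab
      refine ⟨T₀.image (· + g), ?_, ?_⟩
      · rw [Finset.card_image_of_injOn hinj, hT₀card]
      · rw [Finset.sum_image hinj, Finset.sum_add_distrib, Finset.sum_const, hT₀card, ← hs]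
        have hkg : (k • g : Fin m → ZMod p) = x - s := by
          rw [← Nat.cast_smul_eq_nsmul (ZMod p) k g, hg, smul_smul,
            mul_inv_cancel₀ hk0, one_smul]
        rw [hkg]
        abel
end

section
/- Let p be an odd prime, m ≥ 1, and G = (Z/pZ)^m with G* = G∖{0}. For every x ∈ G and 1 ≤ k ≤ p^m − 1, the number of k-subsets of G* summing to x is positive, except in the cases: k = 1 with x = 0; k = p^m − 2 with x = 0; and k = p^m − 1 with x ≠ 0. -/
open Finset

section Aux
variable {p m : ℕ}

private lemma aux_two (hp : p.Prime) (hodd : Odd p) (v : Fin m → ZMod p)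
    (h : v + v = 0) : v = 0 := by
  haveI := Fact.mk hp
  funext i
  have h2 : (2 : ZMod p) ≠ 0 := by
    have : ((2:ℕ) : ZMod p) ≠ 0 := by
      rw [Ne, ZMod.natCast_eq_zero_iff]
      intro hd
      rcases (Nat.prime_dvd_prime_iff_eq hp Nat.prime_two).mp hd with rfl
      exact (Nat.not_odd_iff_even.mpr (even_two)) hodd
    simpa using this
  have hv : v i + v i = 0 := congrFun h i
  have : (2 : ZMod p) * v i = 0 := by linear_combination hv
  rcases mul_eq_zero.mp this with h' | h'
  · exact absurd h' h2
  · exact h'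

private lemma aux_card [NeZero p] : Fintype.card (Fin m → ZMod p) = p ^ m := by
  simp [ZMod.card]

private lemma aux_sum_univ [NeZero p] (hp : p.Prime) (hodd : Odd p) :
    ∑ g : Fin m → ZMod p, g = 0 := by
  haveI := Fact.mk hp
  have h : ∑ g : Fin m → ZMod p, g = ∑ g : Fin m → ZMod p, -g :=
    (Fintype.sum_equiv (Equiv.neg _) _ _ (fun g => rfl)).symm
  rw [Finset.sum_neg_distrib] at h
  exact aux_two hp hodd _ (by linear_combination h)

end Aux

section Main
variable {p m : ℕ}

/-- Existence of a `k`-subset of `G∖{0}` summing to `x`. -/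
private def E (p m : ℕ) (k : ℕ) (x : Fin m → ZMod p) : Prop :=
  ∃ T : Finset (Fin m → ZMod p), (0 : Fin m → ZMod p) ∉ T ∧ T.card = k ∧ ∑ t ∈ T, t = x

private lemma aux_neg {k : ℕ} {x : Fin m → ZMod p} (h : E p m k x) : E p m k (-x) := by
  obtain ⟨T, h0, hc, hs⟩ := h
  classical
  refine ⟨T.image (fun t => -t), ?_, ?_, ?_⟩
  · intro hmem
    obtain ⟨t, ht, ht2⟩ := Finset.mem_image.mp hmem
    have : t = 0 := by simpa [neg_eq_zero] using ht2
    exact h0 (this ▸ ht)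
  · rw [Finset.card_image_of_injective _ neg_injective, hc]
  · rw [Finset.sum_image (fun a _ b _ hab => neg_injective hab), Finset.sum_neg_distrib, hs]

private lemma aux_compl (hp : p.Prime) (hodd : Odd p) {k : ℕ} {x : Fin m → ZMod p}
    (h : E p m k x) : E p m (p ^ m - 1 - k) (-x) := by
  haveI : NeZero p := ⟨hp.pos.ne'⟩
  classical
  obtain ⟨T, h0, hc, hs⟩ := h
  refine ⟨Finset.univ \ insert 0 T, ?_, ?_, ?_⟩
  · simp
  · rw [Finset.card_sdiff_of_subset (Finset.subset_univ _), Finset.card_insert_of_notMem h0,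
      Finset.card_univ, aux_card, hc]
    omega
  · rw [Finset.sum_sdiff_eq_sub (Finset.subset_univ _), Finset.sum_insert h0, hs]
    rw [show ∑ t : Fin m → ZMod p, t = 0 from aux_sum_univ hp hodd]
    abel

private lemma aux_step (hp : p.Prime) (hodd : Odd p) {k : ℕ} {x : Fin m → ZMod p}
    (hk : 2 * k + 1 < p ^ m) (h : E p m k x) : E p m (k + 2) x := by
  haveI : NeZero p := ⟨hp.pos.ne'⟩
  classical
  obtain ⟨T, h0, hc, hs⟩ := h
  have hbad : (insert 0 (T ∪ T.image (fun t => -t))).card < Fintype.card (Fin m → ZMod p) := by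
    calc (insert 0 (T ∪ T.image (fun t => -t))).card
        ≤ (T ∪ T.image (fun t => -t)).card + 1 := Finset.card_insert_le _ _
      _ ≤ (T.card + (T.image (fun t => -t)).card) + 1 :=
          Nat.add_le_add_right (Finset.card_union_le _ _) 1
      _ ≤ 2 * k + 1 := by
          rw [Finset.card_image_of_injective _ neg_injective, hc]; omega
      _ < Fintype.card (Fin m → ZMod p) := by rw [aux_card]; exact hk
  obtain ⟨a, ha⟩ : ∃ a, a ∉ insert 0 (T ∪ T.image (fun t => -t)) := by
    by_contra hcon
    push_neg at hcon
    have hsub : (Finset.univ : Finset (Fin m → ZMod p)) ⊆ insert 0 (T ∪ T.image (fun t => -t)) :=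
      fun a _ => hcon a
    have := Finset.card_le_card hsub
    rw [Finset.card_univ] at this
    omega
  simp only [Finset.mem_insert, Finset.mem_union, Finset.mem_image, not_or] at ha
  obtain ⟨ha0, haT, hanegT⟩ := ha
  have hnaT : -a ∉ T := fun hmem => hanegT ⟨-a, hmem, neg_neg a⟩
  have hana : a ≠ -a := fun hne => ha0 (aux_two hp hodd a (by linear_combination hne))
  refine ⟨insert a (insert (-a) T), ?_, ?_, ?_⟩
  · simp only [Finset.mem_insert, not_or]
    exact ⟨fun h' => ha0 h'.symm, fun h' => ha0 (by simpa [neg_eq_zero] using h'.symm), h0⟩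
  · rw [Finset.card_insert_of_notMem (by simp [haT, hana]),
      Finset.card_insert_of_notMem hnaT, hc]
  · rw [Finset.sum_insert (by simp [haT, hana]), Finset.sum_insert hnaT, hs]
    abel

private lemma aux_reach (hp : p.Prime) (hodd : Odd p) (j : ℕ) :
    ∀ (r : ℕ) (x : Fin m → ZMod p), E p m r x → 2 * (r + 2 * j) ≤ p ^ m + 1 →
      E p m (r + 2 * j) x := by
  induction j with
  | zero => intro r x h _; simpa using h
  | succ n ih =>
    intro r x h hle
    have hn : Odd (p ^ m) := hodd.pow
    have h1 : 2 * r + 1 < p ^ m := by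
      rcases hn with ⟨t, ht⟩
      omega
    have := ih (r + 2) x (aux_step hp hodd h1 h) (by omega)
    rw [show r + 2 * (n + 1) = r + 2 + 2 * n from by omega]
    exact this

private lemma aux_avoid (hp : p.Prime) (s : Finset (Fin m → ZMod p))
    (h : s.card < p ^ m) : ∃ a, a ∉ s := by
  haveI : NeZero p := ⟨hp.pos.ne'⟩
  by_contra hcon
  push_neg at hcon
  have hsub : (Finset.univ : Finset (Fin m → ZMod p)) ⊆ s := fun a _ => hcon a
  have := Finset.card_le_card hsub
  rw [Finset.card_univ, aux_card] at this
  omega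

private lemma aux_base1 {x : Fin m → ZMod p} (hx : x ≠ 0) : E p m 1 x :=
  ⟨{x}, by simp [Ne.symm hx], by simp, by simp⟩

private lemma aux_base2_zero (hp : p.Prime) (hodd : Odd p) (hm : 1 ≤ m) :
    E p m 2 (0 : Fin m → ZMod p) := by
  haveI : NeZero p := ⟨hp.pos.ne'⟩
  classical
  have hcard : ({0} : Finset (Fin m → ZMod p)).card < p ^ m := by
    have h2 : 2 ≤ p := hp.two_le
    obtain ⟨t, ht⟩ := hodd
    have h3 : 3 ≤ p := by omega
    have : 3 ≤ p ^ m := le_trans h3 (Nat.le_self_pow (by omega) p)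
    simpa using by omega
  obtain ⟨a, ha⟩ := aux_avoid hp _ hcard
  have ha0 : a ≠ 0 := by simpa using ha
  have hana : a ≠ -a := fun hne => ha0 (aux_two hp hodd a (by linear_combination hne))
  refine ⟨{a, -a}, ?_, ?_, ?_⟩
  · simp only [Finset.mem_insert, Finset.mem_singleton, not_or]
    refine ⟨Ne.symm ha0, fun h => ha0 ?_⟩
    simpa [neg_eq_zero] using h.symm
  · rw [Finset.card_insert_of_notMem (by simp [hana]), Finset.card_singleton]
  · rw [Finset.sum_insert (by simp [hana]), Finset.sum_singleton]
    abel

private lemma aux_two_ne (hp : p.Prime) (hodd : Odd p) : (2 : ZMod p) ≠ 0 := by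
  haveI := Fact.mk hp
  have : ((2:ℕ) : ZMod p) ≠ 0 := by
    rw [Ne, ZMod.natCast_eq_zero_iff]
    intro hd
    rcases (Nat.prime_dvd_prime_iff_eq hp Nat.prime_two).mp hd with rfl
    exact (Nat.not_odd_iff_even.mpr (even_two)) hodd
  simpa using this

private lemma aux_base2_ne (hp : p.Prime) (hodd : Odd p) (hn : 5 ≤ p ^ m)
    {x : Fin m → ZMod p} (hx : x ≠ 0) : E p m 2 x := by
  haveI := Fact.mk hp
  classical
  have hc3 : ({0, x, (2:ZMod p)⁻¹ • x} : Finset (Fin m → ZMod p)).card ≤ 3 := by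
    refine le_trans (Finset.card_insert_le _ _) ?_
    refine Nat.add_le_add_right ?_ 1
    refine le_trans (Finset.card_insert_le _ _) ?_
    simp
  obtain ⟨a, ha⟩ := aux_avoid hp _ (lt_of_le_of_lt hc3 (by omega))
  simp only [Finset.mem_insert, Finset.mem_singleton, not_or] at ha
  obtain ⟨ha0, hax, hahalf⟩ := ha
  have hb0 : x - a ≠ 0 := fun h => hax (by linear_combination -h)
  have hab : a ≠ x - a := by
    intro h
    refine hahalf ?_
    have h2 : (2 : ZMod p) • a = x := by
      rw [two_smul]; linear_combination h
    rw [← h2, smul_smul, inv_mul_cancel₀ (aux_two_ne hp hodd), one_smul]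
  refine ⟨{a, x - a}, ?_, ?_, ?_⟩
  · simp only [Finset.mem_insert, Finset.mem_singleton, not_or]
    exact ⟨Ne.symm ha0, Ne.symm hb0⟩
  · rw [Finset.card_insert_of_notMem (by simpa using hab), Finset.card_singleton]
  · rw [Finset.sum_insert (by simpa using hab), Finset.sum_singleton]
    abel

private lemma aux_base3_zero (hp : p.Prime) (hodd : Odd p) (hn : 7 ≤ p ^ m) :
    E p m 3 (0 : Fin m → ZMod p) := by
  haveI := Fact.mk hp
  classical
  obtain ⟨a, ha⟩ := aux_avoid hp ({0} : Finset (Fin m → ZMod p)) (by rw [Finset.card_singleton]; omega)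
  have ha0 : a ≠ 0 := by simpa using ha
  have hc5 : ({0, a, -a, -((2:ZMod p) • a), -((2:ZMod p)⁻¹ • a)} :
      Finset (Fin m → ZMod p)).card ≤ 5 := by
    refine le_trans (Finset.card_insert_le _ _) (Nat.add_le_add_right ?_ 1)
    refine le_trans (Finset.card_insert_le _ _) (Nat.add_le_add_right ?_ 1)
    refine le_trans (Finset.card_insert_le _ _) (Nat.add_le_add_right ?_ 1)
    refine le_trans (Finset.card_insert_le _ _) (Nat.add_le_add_right ?_ 1)
    simp
  obtain ⟨b, hb⟩ := aux_avoid hp _ (lt_of_le_of_lt hc5 (by omega))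
  simp only [Finset.mem_insert, Finset.mem_singleton, not_or] at hb
  obtain ⟨hb0, hba, hbna, hb2a, hbha⟩ := hb
  set c : Fin m → ZMod p := -a - b with hc
  have hc0 : c ≠ 0 := fun h => hbna (by rw [hc] at h; linear_combination -h)
  have hca : c ≠ a := by
    intro h
    refine hb2a ?_
    have : b = -(a + a) := by rw [hc] at h; linear_combination -h
    rw [this, two_smul]
  have hcb : c ≠ b := by
    intro h
    refine hbha ?_
    have h2 : (2 : ZMod p) • b = -a := by rw [two_smul]; rw [hc] at h; linear_combination -h
    have : b = (2:ZMod p)⁻¹ • (-a) := by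
      rw [← h2, smul_smul, inv_mul_cancel₀ (aux_two_ne hp hodd), one_smul]
    rw [this, smul_neg]
  refine ⟨{a, b, c}, ?_, ?_, ?_⟩
  · simp only [Finset.mem_insert, Finset.mem_singleton, not_or]
    exact ⟨Ne.symm ha0, Ne.symm hb0, Ne.symm hc0⟩
  · rw [Finset.card_insert_of_notMem (by simp [Ne.symm hba, Ne.symm hca]),
      Finset.card_insert_of_notMem (by simpa using Ne.symm hcb), Finset.card_singleton]
  · rw [Finset.sum_insert (by simp [Ne.symm hba, Ne.symm hca]),
      Finset.sum_insert (by simpa using Ne.symm hcb), Finset.sum_singleton, hc]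
    abel

private lemma aux_small (hp : p.Prime) (hodd : Odd p) (hm : 1 ≤ m) {k : ℕ}
    {x : Fin m → ZMod p} (hk1 : 1 ≤ k) (hk : 2 * k ≤ p ^ m + 1)
    (h1 : ¬(k = 1 ∧ x = 0)) (h2 : ¬(k = p ^ m - 2 ∧ x = 0))
    (h3 : ¬(k = p ^ m - 1 ∧ x ≠ 0)) :
    E p m k x := by
  have hn3 : 3 ≤ p ^ m := by
    have h2p : 2 ≤ p := hp.two_le
    obtain ⟨t, ht⟩ := hodd
    have h3p : 3 ≤ p := by omega
    exact le_trans h3p (Nat.le_self_pow (by omega) p)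
  obtain ⟨s, hs⟩ := (hodd.pow : Odd (p ^ m))
  by_cases hx : x = 0
  · subst hx
    have hk1' : k ≠ 1 := fun h => h1 ⟨h, rfl⟩
    have hkn2 : k ≠ p ^ m - 2 := fun h => h2 ⟨h, rfl⟩
    rcases Nat.even_or_odd k with he | ho
    · obtain ⟨t, ht⟩ := he
      rw [show k = 2 + 2 * (t - 1) from by omega]
      exact aux_reach hp hodd _ _ _ (aux_base2_zero hp hodd hm) (by omega)
    · obtain ⟨t, ht⟩ := ho
      have h7 : 7 ≤ p ^ m := by omega
      rw [show k = 3 + 2 * (t - 1) from by omega]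
      exact aux_reach hp hodd _ _ _ (aux_base3_zero hp hodd h7) (by omega)
  · rcases Nat.even_or_odd k with he | ho
    · obtain ⟨t, ht⟩ := he
      have hkn1 : k ≠ p ^ m - 1 := fun h => h3 ⟨h, hx⟩
      have h5 : 5 ≤ p ^ m := by omega
      rw [show k = 2 + 2 * (t - 1) from by omega]
      exact aux_reach hp hodd _ _ _ (aux_base2_ne hp hodd h5 hx) (by omega)
    · obtain ⟨t, ht⟩ := ho
      rw [show k = 1 + 2 * t from by omega]
      exact aux_reach hp hodd _ _ _ (aux_base1 hx) (by omega)

private lemma aux_exists (hp : p.Prime) (hodd : Odd p) (hm : 1 ≤ m) {k : ℕ}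
    {x : Fin m → ZMod p} (hk1 : 1 ≤ k) (hk2 : k ≤ p ^ m - 1)
    (hne : ¬((k = 1 ∧ x = 0) ∨ (k = p ^ m - 2 ∧ x = 0) ∨ (k = p ^ m - 1 ∧ x ≠ 0))) :
    E p m k x := by
  haveI : NeZero p := ⟨hp.pos.ne'⟩
  classical
  push_neg at hne
  obtain ⟨nh1, nh2, nh3⟩ := hne
  have hn3 : 3 ≤ p ^ m := by
    have h2p : 2 ≤ p := hp.two_le
    obtain ⟨t, ht⟩ := hodd
    have h3p : 3 ≤ p := by omega
    exact le_trans h3p (Nat.le_self_pow (by omega) p)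
  by_cases hkn1 : k = p ^ m - 1
  · have hx : x = 0 := nh3 hkn1
    subst hx
    refine ⟨Finset.univ \ {0}, by simp, ?_, ?_⟩
    · rw [Finset.card_sdiff_of_subset (Finset.subset_univ _), Finset.card_univ, aux_card,
        Finset.card_singleton, hkn1]
    · rw [Finset.sum_sdiff_eq_sub (Finset.subset_univ _), aux_sum_univ hp hodd]
      simp
  · by_cases hsmall : 2 * k ≤ p ^ m + 1
    · refine aux_small hp hodd hm hk1 hsmall ?_ ?_ ?_
      · rintro ⟨ha, hb⟩; exact nh1 ha hb
      · rintro ⟨ha, hb⟩; exact nh2 ha hb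
      · rintro ⟨ha, _⟩; exact hkn1 ha
    · have hkle : k ≤ p ^ m - 2 := by omega
      have h' : E p m (p ^ m - 1 - k) (-x) := by
        refine aux_small hp hodd hm (by omega) (by omega) ?_ ?_ ?_
        · rintro ⟨ha, hb⟩
          exact nh2 (by omega) (neg_eq_zero.mp hb)
        · rintro ⟨ha, hb⟩
          exact nh1 (by omega) (neg_eq_zero.mp hb)
        · rintro ⟨ha, _⟩
          omega
      have hfin := aux_compl hp hodd h'
      rw [neg_neg, show p ^ m - 1 - (p ^ m - 1 - k) = k from by omega] at hfin
      exact hfin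

private lemma aux_not (hp : p.Prime) (hodd : Odd p) (hm : 1 ≤ m)
    {k : ℕ} {x : Fin m → ZMod p}
    (h : (k = 1 ∧ x = 0) ∨ (k = p ^ m - 2 ∧ x = 0) ∨ (k = p ^ m - 1 ∧ x ≠ 0)) :
    ¬ E p m k x := by
  haveI : NeZero p := ⟨hp.pos.ne'⟩
  classical
  have hn3 : 3 ≤ p ^ m := by
    have h2p : 2 ≤ p := hp.two_le
    obtain ⟨t, ht⟩ := hodd
    have h3p : 3 ≤ p := by omega
    exact le_trans h3p (Nat.le_self_pow (by omega) p)
  rintro ⟨T, h0, hc, hs⟩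
  rcases h with ⟨hk, hx⟩ | ⟨hk, hx⟩ | ⟨hk, hx⟩
  · subst hk hx
    obtain ⟨t, rfl⟩ := Finset.card_eq_one.mp hc
    rw [Finset.sum_singleton] at hs
    exact h0 (by rw [hs]; exact Finset.mem_singleton_self 0)
  · subst hk hx
    have hcard : (Finset.univ \ insert 0 T).card = 1 := by
      rw [Finset.card_sdiff_of_subset (Finset.subset_univ _), Finset.card_univ, aux_card,
        Finset.card_insert_of_notMem h0, hc]
      omega
    obtain ⟨g, hg⟩ := Finset.card_eq_one.mp hcard
    have hsum := Finset.sum_sdiff (Finset.subset_univ (insert 0 T))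
      (f := fun t : Fin m → ZMod p => t)
    rw [hg, Finset.sum_singleton, Finset.sum_insert h0, hs, aux_sum_univ hp hodd] at hsum
    have hg0 : g = 0 := by linear_combination hsum
    have hgmem : g ∈ Finset.univ \ insert 0 T := by rw [hg]; exact Finset.mem_singleton_self g
    rw [Finset.mem_sdiff] at hgmem
    exact hgmem.2 (by rw [hg0]; exact Finset.mem_insert_self 0 T)
  · subst hk
    have hsub : T ⊆ Finset.univ \ {0} := by
      intro t ht
      rw [Finset.mem_sdiff, Finset.mem_singleton]
      exact ⟨Finset.mem_univ t, fun h' => h0 (h' ▸ ht)⟩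
    have hcard' : (Finset.univ \ ({0} : Finset (Fin m → ZMod p))).card ≤ T.card := by
      rw [Finset.card_sdiff_of_subset (Finset.subset_univ _), Finset.card_univ, aux_card,
        Finset.card_singleton, hc]
    have hTeq : T = Finset.univ \ {0} := Finset.eq_of_subset_of_card_le hsub hcard'
    rw [hTeq, Finset.sum_sdiff_eq_sub (Finset.subset_univ _), aux_sum_univ hp hodd,
      Finset.sum_singleton] at hs
    exact hx (by rw [← hs]; abel)

end Main

/-- In G = (Z/pZ)^m with p an odd prime, the number of k-subsets of G* = G∖{0}
summing to x is positive, except exactly in the cases k = 1 with x = 0,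
k = p^m − 2 with x = 0, and k = p^m − 1 with x ≠ 0. -/
theorem stmt_11 (p m : ℕ) (hp : p.Prime) (hodd : Odd p) (hm : 1 ≤ m)
    (x : Fin m → ZMod p) (k : ℕ) (hk1 : 1 ≤ k) (hk2 : k ≤ p ^ m - 1) :
    0 < Nat.card {T : Finset (Fin m → ZMod p) //
          (0 : Fin m → ZMod p) ∉ T ∧ T.card = k ∧ ∑ t ∈ T, t = x}
      ↔ ¬((k = 1 ∧ x = 0) ∨ (k = p ^ m - 2 ∧ x = 0) ∨ (k = p ^ m - 1 ∧ x ≠ 0)) := by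
  haveI : NeZero p := ⟨hp.pos.ne'⟩
  classical
  constructor
  · intro hpos h
    obtain ⟨⟨T, hT⟩⟩ := (Nat.card_pos_iff.mp hpos).1
    exact aux_not hp hodd hm h ⟨T, hT.1, hT.2.1, hT.2.2⟩
  · intro hne
    obtain ⟨T, h0, hc, hs⟩ := aux_exists hp hodd hm hk1 hk2 hne
    exact Nat.card_pos_iff.mpr ⟨⟨⟨T, h0, hc, hs⟩⟩, inferInstance⟩
end

section
/- Let p be an odd prime, m ≥ 1, G = (Z/pZ)^m, x ∈ G, and 1 ≤ k ≤ p^m − 1. Let B_k^x be the family of k-subsets of G summing to x. Then (G, B_k^x) is a 1-design (every point of G lies in the same number of blocks) if and only if p divides k. -/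
/-!
Translating a k-subset by `c` adds `k • c` to its sum and moves each of its points by `c`.
If `p ∣ k` then `k • c = 0`, so translations permute `B_k^x` and act transitively on the points:
every point lies in equally many blocks. If `p ∤ k` then `c ↦ k • c` is bijective, so the sum
map on k-subsets has `p^m` fibres of equal size; double counting a constant replication number `r`
then gives `p^m * r = C(p^m - 1, k - 1)`, impossible since `C(p^m - 1, j) ≡ (-1)^j [MOD p]`.
-/

open Finset
open scoped Pointwise

theorem ZMod.natCast_choose_pow_sub_one {p : ℕ} [Fact p.Prime] {m j : ℕ} (hj : j < p ^ m) :
    ((p ^ m - 1).choose j : ZMod p) = (-1) ^ j := by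
  induction j with
  | zero => simp
  | succ j ih =>
    have hpascal : (p ^ m).choose (j + 1) = (p ^ m - 1).choose j + (p ^ m - 1).choose (j + 1) := by
      rw [← Nat.choose_succ_succ', Nat.sub_add_cancel (by omega)]
    have hdvd : ((p ^ m).choose (j + 1) : ZMod p) = 0 :=
      (ZMod.natCast_eq_zero_iff _ _).2 <| (Fact.out : p.Prime).dvd_choose_pow j.succ_ne_zero hj.ne
    rw [hpascal, Nat.cast_add, ih (by omega)] at hdvd
    linear_combination hdvd

theorem Nat.Prime.not_dvd_choose_pow_sub_one {p : ℕ} (hp : p.Prime) {m j : ℕ} (hj : j < p ^ m) :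
    ¬p ∣ (p ^ m - 1).choose j := by
  have := Fact.mk hp
  rw [← ZMod.natCast_eq_zero_iff, ZMod.natCast_choose_pow_sub_one hj]
  exact pow_ne_zero _ (neg_ne_zero.2 one_ne_zero)

theorem Finset.sum_vadd_finset {G : Type*} [AddCommGroup G] [DecidableEq G] (c : G)
    (T : Finset G) : ∑ t ∈ c +ᵥ T, t = ∑ t ∈ T, t + #T • c := by
  rw [vadd_finset_def, sum_image (AddAction.injective c).injOn,
    sum_congr rfl fun _ _ ↦ vadd_eq_add .., sum_add_distrib, sum_const, add_comm]

namespace SubsetSumDesign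

variable {G : Type*} [AddCommGroup G] [Fintype G] [DecidableEq G]

def blocks (k : ℕ) (x : G) : Finset (Finset G) :=
  {T ∈ univ.powersetCard k | ∑ t ∈ T, t = x}

theorem mem_blocks {k : ℕ} {x : G} {T : Finset G} :
    T ∈ blocks k x ↔ #T = k ∧ ∑ t ∈ T, t = x := by
  simp [blocks]

theorem vadd_mem_blocks_iff {k : ℕ} {x c : G} {T : Finset G} :
    c +ᵥ T ∈ blocks k (x + k • c) ↔ T ∈ blocks k x := by
  simp only [mem_blocks, card_vadd_finset, sum_vadd_finset]
  constructor
  · rintro ⟨rfl, h⟩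
    exact ⟨rfl, add_right_cancel h⟩
  · rintro ⟨rfl, rfl⟩
    exact ⟨rfl, rfl⟩

theorem natCard_subtype_eq_card_filter_mem_blocks (k : ℕ) (x g : G) :
    Nat.card {T : Finset G // (#T = k ∧ ∑ t ∈ T, t = x) ∧ g ∈ T} =
      #{T ∈ blocks k x | g ∈ T} := by
  rw [Nat.card_eq_fintype_card, Fintype.card_subtype]
  congr 1
  ext T
  simp [mem_blocks]

theorem card_blocks_eq_add_nsmul (k : ℕ) (x c : G) :
    #(blocks k x) = #(blocks k (x + k • c)) :=
  card_equiv (AddAction.toPerm c) fun _ ↦ vadd_mem_blocks_iff.symm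

theorem card_filter_mem_blocks_eq_add_nsmul (k : ℕ) (x c g : G) :
    #{T ∈ blocks k x | g ∈ T} = #{T ∈ blocks k (x + k • c) | c + g ∈ T} :=
  card_equiv (AddAction.toPerm c) fun T ↦ by
    rw [mem_filter, mem_filter, AddAction.toPerm_apply, vadd_mem_blocks_iff, ← vadd_eq_add c g,
      vadd_mem_vadd_finset_iff]

theorem card_filter_mem_blocks_eq_of_forall_nsmul_eq_zero {k : ℕ} (hk : ∀ c : G, k • c = 0)
    (x g g' : G) : #{T ∈ blocks k x | g ∈ T} = #{T ∈ blocks k x | g' ∈ T} := by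
  simpa [hk] using card_filter_mem_blocks_eq_add_nsmul k x (g' - g) g

theorem card_blocks_eq_of_coprime {k : ℕ} (hk : (Nat.card G).Coprime k) (x y : G) :
    #(blocks k x) = #(blocks k y) := by
  obtain ⟨c, hc⟩ := (nsmulCoprime hk).surjective (y - x)
  have hc : k • c = y - x := hc
  rw [card_blocks_eq_add_nsmul k x c, hc, add_sub_cancel]

theorem card_mul_card_blocks_of_coprime {k : ℕ} (hk : (Nat.card G).Coprime k) (x : G) :
    Fintype.card G * #(blocks k x) = (Fintype.card G).choose k := by
  calc Fintype.card G * #(blocks k x) = ∑ y : G, #(blocks k y) := by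
        simp [card_blocks_eq_of_coprime hk _ x]
    _ = #(univ.powersetCard k : Finset (Finset G)) :=
        (card_eq_sum_card_fiberwise fun _ _ ↦ mem_univ _).symm
    _ = (Fintype.card G).choose k := by simp

theorem card_mul_eq_choose_of_card_filter_mem_blocks_eq {k r : ℕ} (hk : (Nat.card G).Coprime k)
    (hk0 : k ≠ 0) (x : G) (hr : ∀ g : G, #{T ∈ blocks k x | g ∈ T} = r) :
    Fintype.card G * r = (Fintype.card G - 1).choose (k - 1) := by
  have hdouble : #(blocks k x) * k = Fintype.card G * r := by
    rw [← sum_card hr, sum_const_nat fun T hT ↦ (mem_blocks.1 hT).1]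
  obtain ⟨n, hn⟩ := Nat.exists_eq_add_one_of_ne_zero (Fintype.card_ne_zero (α := G))
  obtain ⟨j, rfl⟩ := Nat.exists_eq_add_one_of_ne_zero hk0
  apply Nat.eq_of_mul_eq_mul_left (Fintype.card_pos (α := G))
  calc Fintype.card G * (Fintype.card G * r)
      = Fintype.card G * #(blocks (j + 1) x) * (j + 1) := by rw [← hdouble, mul_assoc]
    _ = (n + 1).choose (j + 1) * (j + 1) := by rw [card_mul_card_blocks_of_coprime hk, hn]
    _ = Fintype.card G * (Fintype.card G - 1).choose (j + 1 - 1) := by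
      rw [← Nat.add_one_mul_choose_eq, hn]; rfl

end SubsetSumDesign

open SubsetSumDesign

theorem stmt_12_general (p m : ℕ) (hp : p.Prime)
    (x : Fin m → ZMod p) (k : ℕ) (hk2 : k ≤ p ^ m - 1) :
    (∃ r : ℕ, ∀ g : Fin m → ZMod p,
        Nat.card {T : Finset (Fin m → ZMod p) //
          (T.card = k ∧ ∑ t ∈ T, t = x) ∧ g ∈ T} = r)
      ↔ p ∣ k := by
  have := Fact.mk hp
  have hcard : Nat.card (Fin m → ZMod p) = p ^ m := by simp
  simp_rw [natCard_subtype_eq_card_filter_mem_blocks]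
  constructor
  · rintro ⟨r, hr⟩
    by_contra hpk
    have hm : m ≠ 0 := by rintro rfl; simp_all
    have hcop : (Nat.card (Fin m → ZMod p)).Coprime k :=
      hcard ▸ ((hp.coprime_iff_not_dvd.2 hpk).pow_left m)
    have hchoose := card_mul_eq_choose_of_card_filter_mem_blocks_eq hcop
      (fun hk ↦ hpk (hk ▸ dvd_zero p)) x hr
    rw [← Nat.card_eq_fintype_card, hcard] at hchoose
    refine hp.not_dvd_choose_pow_sub_one (m := m) (j := k - 1) ?_ ?_
    · have := pow_pos hp.pos m
      omega
    · exact hchoose ▸ dvd_mul_of_dvd_left (dvd_pow_self p hm) r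
  · intro hpk
    refine ⟨_, fun g ↦ card_filter_mem_blocks_eq_of_forall_nsmul_eq_zero (fun c ↦ ?_) x g 0⟩
    rw [← Nat.cast_smul_eq_nsmul (ZMod p), (ZMod.natCast_eq_zero_iff _ _).2 hpk, zero_smul]

/-- (G, B_k^x) with G = (Z/pZ)^m, p an odd prime, is a 1-design iff p ∣ k. -/
theorem stmt_12 (p m : ℕ) (hp : p.Prime) (hodd : Odd p) (hm : 1 ≤ m)
    (x : Fin m → ZMod p) (k : ℕ) (hk1 : 1 ≤ k) (hk2 : k ≤ p ^ m - 1) :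
    (∃ r : ℕ, ∀ g : Fin m → ZMod p,
        Nat.card {T : Finset (Fin m → ZMod p) //
          (T.card = k ∧ ∑ t ∈ T, t = x) ∧ g ∈ T} = r)
      ↔ p ∣ k :=
  stmt_12_general p m hp x k hk2
end

section
/- Let C be a linear [n, k, d] code over F_q and let h ≤ n be an integer satisfying h − ⌊(h + q − 2)/(q − 1)⌋ < d. Then for any weight w with d ≤ w ≤ h, two codewords of C of weight w with the same support are scalar multiples of each other; hence the multiset H_w(C) of supports (counted with multiplicity divided by q−1) has no repeated blocks. -/
/-- If h satisfies h − ⌊(h+q−2)/(q−1)⌋ < d, then two codewords of weight w with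
d ≤ w ≤ h having the same support are scalar multiples of each other. -/
theorem stmt_19 (q n k d h w : ℕ) (F : Type) [Field F] [Fintype F] [DecidableEq F]
    (hq : Fintype.card F = q)
    (C : Submodule F (Fin n → F)) (hdim : Module.finrank F C = k)
    (hmin1 : ∀ c ∈ C, c ≠ 0 → d ≤ hammingNorm c)
    (hmin2 : ∃ c ∈ C, c ≠ 0 ∧ hammingNorm c = d)
    (hh : h ≤ n) (hcond : h - (h + q - 2) / (q - 1) < d)
    (hw1 : d ≤ w) (hw2 : w ≤ h) :
    ∀ c ∈ C, ∀ c' ∈ C, hammingNorm c = w → hammingNorm c' = w →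
      Function.support c = Function.support c' →
      ∃ a : F, a ≠ 0 ∧ c' = a • c := by
  intro c hc c' hc' hwc hwc' hsupp
  have hq2 : 2 ≤ q := hq ▸ Fintype.one_lt_card
  have hd1 : 1 ≤ d := by
    obtain ⟨c₀, _, hne, hnorm⟩ := hmin2
    rw [← hnorm]
    exact Nat.one_le_iff_ne_zero.mpr (fun h0 => hne (hammingNorm_eq_zero.mp h0))
  have hw0 : 1 ≤ w := le_trans hd1 hw1
  -- support membership transfer
  have hsupp' : ∀ i, c i ≠ 0 ↔ c' i ≠ 0 := by
    intro i
    constructor <;> intro hi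
    · exact (hsupp ▸ (Function.mem_support.mpr hi) : i ∈ Function.support c')
    · exact (hsupp ▸ (Function.mem_support.mpr hi) : i ∈ Function.support c)
  set S : Finset (Fin n) := {i | c i ≠ 0} with hS
  have hScard : S.card = w := hwc
  set t : Finset F := {a | a ≠ 0} with ht
  have htcard : t.card = q - 1 := by
    have : t = Finset.univ \ {0} := by
      ext a; simp [ht]
    rw [this, Finset.card_sdiff_of_subset (by simp)]
    simp [hq]
  set X := (w + q - 2) / (q - 1) with hX
  have hX1 : 1 ≤ X := by
    rw [hX]
    rw [Nat.le_div_iff_mul_le (by omega)]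
    omega
  have hXle : (q - 1) * X ≤ w + q - 2 := by
    rw [hX, mul_comm]; exact Nat.div_mul_le_self _ _
  -- pigeonhole
  set f : Fin n → F := fun i => c' i / c i with hf
  have hmaps : ∀ i ∈ S, f i ∈ t := by
    intro i hi
    have hci : c i ≠ 0 := by simpa [hS] using hi
    have hci' : c' i ≠ 0 := (hsupp' i).mp hci
    simp [ht, hf, div_ne_zero hci' hci]
  have hmul : t.card * (X - 1) < S.card := by
    rw [htcard, hScard]
    have : (q - 1) * (X - 1) + (q - 1) * 1 = (q - 1) * X := by
      rw [← Nat.mul_add]; congr 1; omega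
    omega
  obtain ⟨a, hat, hfib⟩ := Finset.exists_lt_card_fiber_of_mul_lt_card_of_maps_to hmaps hmul
  have ha : a ≠ 0 := by simpa [ht] using hat
  set T : Finset (Fin n) := {i ∈ S | f i = a} with hT
  have hTS : T ⊆ S := Finset.filter_subset _ _
  have hTcard : X ≤ T.card := by omega
  -- the difference codeword
  set e : Fin n → F := c' - a • c with he
  have heC : e ∈ C := Submodule.sub_mem C hc' (Submodule.smul_mem C a hc)
  have hesupp : ({i | e i ≠ 0} : Finset (Fin n)) ⊆ S \ T := by
    intro i hi
    have hei : e i ≠ 0 := by simpa using hi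
    have hiS : i ∈ S := by
      by_contra hiS
      have hci : c i = 0 := by simpa [hS] using hiS
      have hci' : c' i = 0 := by
        by_contra h'
        exact ((hsupp' i).mpr h') hci
      exact hei (by simp [he, hci, hci'])
    refine Finset.mem_sdiff.mpr ⟨hiS, fun hiT => ?_⟩
    have hci : c i ≠ 0 := by simpa [hS] using hiS
    have hfa : f i = a := (Finset.mem_filter.mp hiT).2
    have : c' i = a * c i := (div_eq_iff hci).mp hfa
    exact hei (by simp [he, this])
  have henorm : hammingNorm e ≤ w - X := by
    calc hammingNorm e ≤ (S \ T).card := Finset.card_le_card hesupp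
    _ = S.card - T.card := Finset.card_sdiff_of_subset hTS
    _ ≤ w - X := by omega
  -- monotonicity: w - X ≤ h - (h+q-2)/(q-1)
  have hmono : w - X ≤ h - (h + q - 2) / (q - 1) := by
    have hkey : (h + q - 2) / (q - 1) ≤ X + (h - w) := by
      have h1 : h + q - 2 ≤ (w + q - 2) + (h - w) * (q - 1) := by
        have : h - w ≤ (h - w) * (q - 1) := Nat.le_mul_of_pos_right _ (by omega)
        omega
      calc (h + q - 2) / (q - 1) ≤ ((w + q - 2) + (h - w) * (q - 1)) / (q - 1) :=
            Nat.div_le_div_right h1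
        _ = X + (h - w) := by rw [Nat.add_mul_div_right _ _ (by omega : 0 < q - 1)]
    omega
  have hlt : hammingNorm e < d := by omega
  have he0 : e = 0 := by
    by_contra h0
    exact absurd (hmin1 e heC h0) (by omega)
  exact ⟨a, ha, by rw [← sub_eq_zero]; exact he0⟩
end
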